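/- arXiv:1106.5747 — 6 statements merged into one kernel-verified Lean document; each statement's English description precedes it below -/
import Mathlib

section
/- In the category of nonempty sets (viewed as acts over the trivial monoid), the singletons are the only geometrically stable sets. Concretely: if |G| ≥ 2, then there exist a finite set X and equivalence relations T₁, T₂ on X such that the union of the solution sets T₁' ∪ T₂' is strictly contained in (T₁ ∩ T₂)'. -/
/-- The kernel of a map, as a set of pairs. -/
def actKer {A B : Type} (f : A → B) : Set (A × A) := {p | f p.1 = f p.2}

/-- A homomorphism of left `S`-acts is an `S`-equivariant map. -/
def IsActHom (S : Type) [Monoid S] {A B : Type} [MulAction S A] [MulAction S B]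
    (f : A → B) : Prop := ∀ (s : S) (a : A), f (s • a) = s • f a

/-- The free left `S`-act on `n` generators: a coproduct of `n` copies of `S`. -/
def FreeAct (S : Type) (n : ℕ) : Type := Fin n × S

instance (S : Type) [Monoid S] (n : ℕ) : SMul S (FreeAct S n) :=
  ⟨fun s p => (p.1, s * p.2)⟩

instance (S : Type) [Monoid S] (n : ℕ) : MulAction S (FreeAct S n) where
  one_smul p := show (p.1, 1 * p.2) = p by rw [one_mul]; rfl
  mul_smul s t p := show (p.1, (s * t) * p.2) = (p.1, s * (t * p.2)) by rw [mul_assoc]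

/-- A congruence on an `S`-act: an equivalence relation compatible with the action. -/
def IsCongruence (S : Type) [Monoid S] {A : Type} [MulAction S A]
    (T : Set (A × A)) : Prop :=
  Equivalence (fun a b => (a, b) ∈ T) ∧
    ∀ (s : S) (a b : A), (a, b) ∈ T → (s • a, s • b) ∈ T

/-- The `G`-closure `T''` of a binary relation `T` on a free `S`-act:
the intersection of the kernels of all homomorphisms into `G` whose kernel contains `T`. -/
def actClosure (S : Type) [Monoid S] (G : Type) [MulAction S G] {n : ℕ}
    (T : Set (FreeAct S n × FreeAct S n)) : Set (FreeAct S n × FreeAct S n) :=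
  {p | ∀ f : FreeAct S n → G, IsActHom S f → T ⊆ actKer f → f p.1 = f p.2}

/-- `T` is a `G`-closed congruence: an intersection of kernels of a set of homomorphisms. -/
def GClosed (S : Type) [Monoid S] (G : Type) [MulAction S G] {n : ℕ}
    (T : Set (FreeAct S n × FreeAct S n)) : Prop :=
  ∃ A : Set (FreeAct S n → G), (∀ f ∈ A, IsActHom S f) ∧
    T = {p | ∀ f ∈ A, f p.1 = f p.2}

/-- Geometric equivalence of `S`-acts. -/
def GeomEquiv (S : Type) [Monoid S] (G₁ G₂ : Type) [MulAction S G₁] [MulAction S G₂] : Prop :=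
  ∀ (n : ℕ) (T : Set (FreeAct S n × FreeAct S n)),
    actClosure S G₁ T = actClosure S G₂ T

/-- Coproduct (disjoint union) action on `A ⊕ B`. -/
instance (S : Type) [Monoid S] {A B : Type} [MulAction S A] [MulAction S B] :
    SMul S (A ⊕ B) :=
  ⟨fun s x => match x with
    | Sum.inl a => Sum.inl (s • a)
    | Sum.inr b => Sum.inr (s • b)⟩

instance (S : Type) [Monoid S] {A B : Type} [MulAction S A] [MulAction S B] :
    MulAction S (A ⊕ B) where
  one_smul x := by
    cases x with
    | inl a => show Sum.inl ((1 : S) • a) = _; rw [one_smul]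
    | inr b => show Sum.inr ((1 : S) • b) = _; rw [one_smul]
  mul_smul s t x := by
    cases x with
    | inl a => show Sum.inl ((s * t) • a) = Sum.inl (s • t • a); rw [mul_smul]
    | inr b => show Sum.inr ((s * t) • b) = Sum.inr (s • t • b); rw [mul_smul]

/-- `Copies I A` is the coproduct of `I` copies of the `S`-act `A`. -/
def Copies (I A : Type) : Type := I × A

instance (S : Type) [Monoid S] {I A : Type} [MulAction S A] : SMul S (Copies I A) :=
  ⟨fun s p => (p.1, s • p.2)⟩

instance (S : Type) [Monoid S] {I A : Type} [MulAction S A] : MulAction S (Copies I A) where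
  one_smul p := show (p.1, (1 : S) • p.2) = p by rw [one_smul]; rfl
  mul_smul s t p := show (p.1, (s * t) • p.2) = (p.1, s • t • p.2) by rw [mul_smul]


/-- The set `T'` of the paper. -/
def solutionSet {X : Type} (G : Type) (T : Set (X × X)) : Set (X → G) := {α | T ⊆ actKer α}

theorem equivalence_actKer {A B : Type} (f : A → B) : Equivalence (fun a b => (a, b) ∈ actKer f) :=
  ⟨fun _ => rfl, Eq.symm, Eq.trans⟩

theorem solutionSet_union_subset_inter {X : Type} (G : Type) (T₁ T₂ : Set (X × X)) :
    solutionSet G T₁ ∪ solutionSet G T₂ ⊆ solutionSet G (T₁ ∩ T₂) :=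
  Set.union_subset (fun _ h => Set.inter_subset_left.trans h)
    (fun _ h => Set.inter_subset_right.trans h)

theorem solutionSet_inter_actKer_eq_univ {X B C : Type} (G : Type) {p : X → B} {q : X → C}
    (hpq : Function.Injective fun x => (p x, q x)) :
    solutionSet G (actKer p ∩ actKer q) = Set.univ :=
  Set.eq_univ_of_forall fun α _ ⟨hp, hq⟩ => congrArg α (hpq (Prod.ext hp hq))

theorem not_mem_solutionSet {X G : Type} {T : Set (X × X)} {α : X → G} {x y : X}
    (hT : (x, y) ∈ T) (hα : α x ≠ α y) : α ∉ solutionSet G T :=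
  fun h => hα (h hT)

/-- In `Set`, singletons are the only geometrically stable sets:
if `|G| ≥ 2` then there are a finite set `X` and equivalence relations `T₁, T₂` on `X`
with `T₁' ∪ T₂'` strictly contained in `(T₁ ∩ T₂)'`. -/
theorem set_not_geometrically_stable (G : Type) (hG : ∃ a b : G, a ≠ b) :
    ∃ (n : ℕ) (T₁ T₂ : Set (Fin n × Fin n)),
      Equivalence (fun a b => (a, b) ∈ T₁) ∧
      Equivalence (fun a b => (a, b) ∈ T₂) ∧
      ({α : Fin n → G | T₁ ⊆ actKer α} ∪ {α : Fin n → G | T₂ ⊆ actKer α})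
        ⊂ {α : Fin n → G | T₁ ∩ T₂ ⊆ actKer α} := by
  obtain ⟨a, b, hab⟩ := hG
  -- `T₁` has classes `{0, 1}, {2}` and `T₂` has classes `{0}, {1, 2}`, so `T₁ ∩ T₂` is the diagonal.
  let p : Fin 3 → Bool := fun x => x = 2
  let q : Fin 3 → Bool := fun x => x = 0
  have hpq : Function.Injective fun x => (p x, q x) := by decide
  let α : Fin 3 → G := fun x => if x = 1 then b else a
  refine ⟨3, actKer p, actKer q, equivalence_actKer p, equivalence_actKer q,
    (Set.ssubset_iff_of_subset (solutionSet_union_subset_inter G _ _)).2 ⟨α, ?_, ?_⟩⟩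
  · exact Set.eq_univ_iff_forall.1 (solutionSet_inter_actKer_eq_univ G hpq) α
  · rintro (h₁ | h₂)
    · exact not_mem_solutionSet (T := actKer p) (x := 0) (y := 1) rfl hab h₁
    · exact not_mem_solutionSet (T := actKer q) (x := 1) (y := 2) rfl hab.symm h₂
end

section
/- Any two sets of cardinality at least 2 are geometrically equivalent; that is, for sets G₁, G₂ with |G₁| ≥ 2 and |G₂| ≥ 2, for every set X and every binary relation T on X, the G₁-closure of T equals the G₂-closure of T. -/
/-! With two distinct values available, any equivalence class can be separated from its
complement by a map constant on classes; hence the closure `T''_G` (`kerClosure G T` below) is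
the equivalence relation generated by `T`, whatever `G` is. -/

def kerClosure (G : Type) {X : Type} (T : Set (X × X)) : Set (X × X) :=
  {p | ∀ α : X → G, T ⊆ actKer α → α p.1 = α p.2}

theorem apply_eq_of_eqvGen {X G : Type} {T : Set (X × X)} {α : X → G} (hT : T ⊆ actKer α)
    {x y : X} (h : Relation.EqvGen (fun x y => (x, y) ∈ T) x y) : α x = α y :=
  congrArg (Quot.lift α fun _ _ hxy => hT hxy) (Quot.eqvGen_sound h)

theorem exists_apply_ne_of_not_eqvGen {X : Type} (G : Type) [Nontrivial G] {T : Set (X × X)}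
    {x y : X} (h : ¬Relation.EqvGen (fun x y => (x, y) ∈ T) x y) :
    ∃ α : X → G, T ⊆ actKer α ∧ α x ≠ α y := by
  classical
  obtain ⟨a, b, hab⟩ := exists_pair_ne G
  let sep : Quot (fun x y => (x, y) ∈ T) → G := fun c => if c = Quot.mk _ x then a else b
  have hy : Quot.mk _ y ≠ Quot.mk _ x := fun hyx => h (Quot.eqvGen_exact hyx).symm
  refine ⟨sep ∘ Quot.mk _, fun p hp => congrArg sep (Quot.sound hp), ?_⟩
  simpa [sep, hy] using hab

theorem kerClosure_eq_eqvGen (G : Type) [Nontrivial G] {X : Type} (T : Set (X × X)) :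
    kerClosure G T = {p | Relation.EqvGen (fun x y => (x, y) ∈ T) p.1 p.2} := by
  ext ⟨x, y⟩
  refine ⟨fun hxy => ?_, fun hxy _ hT => apply_eq_of_eqvGen hT hxy⟩
  by_contra h
  obtain ⟨α, hT, hne⟩ := exists_apply_ne_of_not_eqvGen G h
  exact hne (hxy α hT)

/-- Any two sets with at least two elements are geometrically
equivalent: the `G₁`-closure of any binary relation on any set equals its `G₂`-closure. -/
theorem sets_with_two_elements_geometrically_equivalent
    (G₁ G₂ : Type) (h₁ : ∃ a b : G₁, a ≠ b) (h₂ : ∃ a b : G₂, a ≠ b)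
    (X : Type) (T : Set (X × X)) :
    {p : X × X | ∀ α : X → G₁, T ⊆ actKer α → α p.1 = α p.2} =
      {p : X × X | ∀ α : X → G₂, T ⊆ actKer α → α p.1 = α p.2} := by
  rw [← nontrivial_iff] at h₁ h₂
  change kerClosure G₁ T = kerClosure G₂ T
  rw [kerClosure_eq_eqvGen, kerClosure_eq_eqvGen]
end

section
/- For any S-act G and any nonempty set I, G is geometrically equivalent to the power act G^I: for every binary relation T on any finitely generated free S-act F_X, T''_G = T''_{G^I}. -/
section

variable {S : Type} [Monoid S]

theorem IsActHom.comp {A B C : Type} [MulAction S A] [MulAction S B] [MulAction S C]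
    {g : B → C} {f : A → B} (hg : IsActHom S g) (hf : IsActHom S f) : IsActHom S (g ∘ f) :=
  fun s a => by simp only [Function.comp_apply, hf s a, hg s (f a)]

theorem isActHom_eval {I G : Type} [MulAction S G] (i : I) :
    IsActHom S (fun x : I → G => x i) :=
  fun _ _ => rfl

theorem isActHom_diagonal (I : Type) {G : Type} [MulAction S G] :
    IsActHom S (fun g : G => fun _ : I => g) :=
  fun _ _ => rfl

theorem actClosure_subset_of_injective {G₁ G₂ : Type} [MulAction S G₁] [MulAction S G₂]
    {e : G₁ → G₂} (he : IsActHom S e) (he_inj : Function.Injective e) {n : ℕ}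
    (T : Set (FreeAct S n × FreeAct S n)) : actClosure S G₂ T ⊆ actClosure S G₁ T :=
  fun _ hp f hf hT => he_inj <| hp (e ∘ f) (he.comp hf) fun _ hq => congrArg e (hT hq)

theorem actClosure_subset_of_separating {ι G₁ G₂ : Type} [MulAction S G₁] [MulAction S G₂]
    {π : ι → G₂ → G₁} (hπ : ∀ i, IsActHom S (π i))
    (hsep : ∀ x y, (∀ i, π i x = π i y) → x = y) {n : ℕ}
    (T : Set (FreeAct S n × FreeAct S n)) : actClosure S G₁ T ⊆ actClosure S G₂ T :=
  fun _ hp f hf hT => hsep _ _ fun i =>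
    hp (π i ∘ f) ((hπ i).comp hf) fun _ hq => congrArg (π i) (hT hq)

end

/-- For any `S`-act `G` and any nonempty set `I`, the act `G` is
geometrically equivalent to the power act `G^I`. -/
theorem geom_equiv_power
    (S : Type) [Monoid S] (G : Type) [MulAction S G] (I : Type) [Nonempty I] :
    GeomEquiv S G (I → G) := by
  intro n T
  apply Set.Subset.antisymm
  · exact actClosure_subset_of_separating isActHom_eval (fun _ _ => funext) T
  · exact actClosure_subset_of_injective (isActHom_diagonal I) Function.const_injective T
end

section
/- Over a group S, if the cyclic S-acts S/G and S/H of left cosets modulo subgroups G and H are geometrically equivalent, then there exist elements α, β ∈ S with α⁻¹Gα ⊆ H and β⁻¹Hβ ⊆ G. -/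
lemma geom_equiv_side (S : Type) [Group S] (G H : Subgroup S)
    (h : GeomEquiv S (S ⧸ G) (S ⧸ H)) :
    ∃ α : S, ∀ g ∈ G, α⁻¹ * g * α ∈ H := by
  by_cases hG : ∀ s : S, s ∈ G
  · refine ⟨1, fun g hg => ?_⟩
    have key : ∀ s : S, s ∈ H := by
      intro s
      have hcl : (((0 : Fin 1), s), ((0 : Fin 1), (1 : S))) ∈ actClosure S (S ⧸ G) (∅ : Set (FreeAct S 1 × FreeAct S 1)) := by
        intro f hf hT
        have hall : ∀ a b : S ⧸ G, a = b := by
          intro a b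
          induction a using QuotientGroup.induction_on
          induction b using QuotientGroup.induction_on
          exact QuotientGroup.eq.mpr (hG _)
        exact hall _ _
      rw [h 1 ∅] at hcl
      have hhom : IsActHom S (fun p : FreeAct S 1 => ((p.2 : S ⧸ H))) := by
        intro t p; rfl
      have := hcl _ hhom (by intro p hp; exact absurd hp (Set.notMem_empty p))
      have : (s : S ⧸ H) = ((1 : S) : S ⧸ H) := this
      have hmem : s⁻¹ * 1 ∈ H := QuotientGroup.eq.mp this
      rw [mul_one] at hmem
      exact (inv_mem_iff).mp hmem
    simpa using key g
  · push_neg at hG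
    obtain ⟨s, hs⟩ := hG
    set T : Set (FreeAct S 1 × FreeAct S 1) :=
      {p | ((p.1.2 : S ⧸ G)) = ((p.2.2 : S ⧸ G))} with hT
    have hhom0 : IsActHom S (fun p : FreeAct S 1 => ((p.2 : S ⧸ G))) := by
      intro t p; rfl
    have hnot : (((0 : Fin 1), s), ((0 : Fin 1), (1 : S))) ∉ actClosure S (S ⧸ H) T := by
      rw [← h 1 T]
      intro hcl
      have := hcl _ hhom0 (by intro p hp; exact hp)
      have : (s : S ⧸ G) = ((1 : S) : S ⧸ G) := this
      have hmem : s⁻¹ * 1 ∈ G := QuotientGroup.eq.mp this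
      rw [mul_one] at hmem
      exact hs ((inv_mem_iff).mp hmem)
    have hnot' : ¬ ∀ f : FreeAct S 1 → S ⧸ H, IsActHom S f → T ⊆ actKer f →
        f ((0 : Fin 1), s) = f ((0 : Fin 1), (1 : S)) := hnot
    push_neg at hnot'
    obtain ⟨f, hf, hker, -⟩ := hnot'
    obtain ⟨α, hα⟩ := Quotient.exists_rep (f ((0 : Fin 1), (1 : S)))
    refine ⟨α, fun g hg => ?_⟩
    have hpair : (((0 : Fin 1), g), ((0 : Fin 1), (1 : S))) ∈ T := by
      show (g : S ⧸ G) = ((1 : S) : S ⧸ G)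
      exact QuotientGroup.eq.mpr (by simpa using inv_mem hg)
    have heq : f ((0 : Fin 1), g) = f ((0 : Fin 1), (1 : S)) := hker hpair
    have hsm : f ((0 : Fin 1), g) = g • f ((0 : Fin 1), (1 : S)) := by
      have h2 := hf g ((0 : Fin 1), (1 : S))
      have h3 : f ((0 : Fin 1), g * 1) = g • f ((0 : Fin 1), (1 : S)) := h2
      rwa [mul_one] at h3
    have : g • f ((0 : Fin 1), (1 : S)) = f ((0 : Fin 1), (1 : S)) := by
      rw [← hsm, heq]
    rw [← hα] at this
    have hq : ((g * α : S) : S ⧸ H) = (α : S ⧸ H) := this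
    have hmem : (g * α)⁻¹ * α ∈ H := QuotientGroup.eq.mp hq
    have : (α⁻¹ * g * α)⁻¹ ∈ H := by
      have : (α⁻¹ * g * α)⁻¹ = (g * α)⁻¹ * α := by group
      rw [this]; exact hmem
    exact (inv_mem_iff).mp this

/-- Over a group `S`, if the coset acts `S/G` and `S/H` are geometrically
equivalent, then there are `α, β ∈ S` with `α⁻¹Gα ⊆ H` and `β⁻¹Hβ ⊆ G`. -/
theorem geom_equiv_coset_acts_gives_conjugate_inclusions
    (S : Type) [Group S] (G H : Subgroup S)
    (h : GeomEquiv S (S ⧸ G) (S ⧸ H)) :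
    (∃ α : S, ∀ g ∈ G, α⁻¹ * g * α ∈ H) ∧ (∃ β : S, ∀ h' ∈ H, β⁻¹ * h' * β ∈ G) := by
  exact ⟨geom_equiv_side S G H h, geom_equiv_side S H G (fun n T => (h n T).symm)⟩
end

section
/- For normal subgroups G and H of a group S, the coset S-acts S/G and S/H are geometrically equivalent if and only if G = H. In particular, for subgroups of an abelian group S, S/G and S/H are geometrically equivalent iff G = H. -/
/-!
If `G` is normal, every `a ∈ G` fixes every point of `S ⧸ G`, so the two generators `(i, a)` and
`(i, 1)` of a free act are identified by every homomorphism into `S ⧸ G`, i.e. by the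
`S ⧸ G`-closure of the empty relation. Geometric equivalence transports this to `S ⧸ H`, where
the projection `(i, t) ↦ t H` detects it as `a ∈ H`. Hence `G ≤ H`, and `H ≤ G` by symmetry.
-/

lemma IsActHom.apply_freeAct {S : Type} [Monoid S] {n : ℕ} {Q : Type} [MulAction S Q]
    {f : FreeAct S n → Q} (hf : IsActHom S f) (i : Fin n) (t : S) :
    f (i, t) = t • f (i, 1) := by
  have e : t • (show FreeAct S n from (i, 1)) = (i, t) := congrArg (Prod.mk i) (mul_one t)
  exact (congrArg f e).symm.trans (hf t _)

lemma GeomEquiv.symm {S : Type} [Monoid S] {A B : Type} [MulAction S A] [MulAction S B]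
    (h : GeomEquiv S A B) : GeomEquiv S B A :=
  fun n T => (h n T).symm

section Coset

variable {S : Type} [Group S]

lemma QuotientGroup.smul_eq_self_of_mem {N : Subgroup S} [N.Normal] {a : S} (ha : a ∈ N)
    (x : S ⧸ N) : a • x = x := by
  induction x using QuotientGroup.induction_on with
  | H x => rw [MulAction.Quotient.smul_coe, smul_eq_mul, QuotientGroup.mk_mul,
      (QuotientGroup.eq_one_iff a).mpr ha, one_mul]

lemma mem_actClosure_quotient_of_mem {N : Subgroup S} [N.Normal] {n : ℕ}
    (T : Set (FreeAct S n × FreeAct S n)) (i : Fin n) {a : S} (ha : a ∈ N) :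
    ((i, a), (i, 1)) ∈ actClosure S (S ⧸ N) T := fun _ hf _ => by
  rw [hf.apply_freeAct i a, QuotientGroup.smul_eq_self_of_mem ha]

lemma mem_of_mem_actClosure_quotient_empty {H : Subgroup S} {n : ℕ} {i : Fin n} {a : S}
    (h : ((i, a), (i, 1)) ∈ actClosure S (S ⧸ H) ∅) : a ∈ H := by
  have h_proj : (a : S ⧸ H) = ((1 : S) : S ⧸ H) :=
    h (fun p => (p.2 : S ⧸ H)) (fun _ _ => rfl) (Set.empty_subset _)
  simpa [QuotientGroup.eq] using h_proj

lemma le_of_geomEquiv_quotient {G H : Subgroup S} [G.Normal]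
    (h : GeomEquiv S (S ⧸ G) (S ⧸ H)) : G ≤ H := fun _ ha =>
  mem_of_mem_actClosure_quotient_empty (i := (0 : Fin 1))
    (h 1 ∅ ▸ mem_actClosure_quotient_of_mem ∅ 0 ha)

theorem geomEquiv_quotient_iff_eq {G H : Subgroup S} [G.Normal] [H.Normal] :
    GeomEquiv S (S ⧸ G) (S ⧸ H) ↔ G = H := by
  refine ⟨fun h => le_antisymm (le_of_geomEquiv_quotient h) (le_of_geomEquiv_quotient h.symm), ?_⟩
  rintro rfl
  exact fun _ _ => rfl

end Coset

/-- For normal subgroups `G, H` of a group `S`, the coset acts `S/G` and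
`S/H` are geometrically equivalent iff `G = H`; in particular this holds for any subgroups
of an abelian group. -/
theorem coset_acts_geom_equiv_iff_eq_of_normal :
    (∀ (S : Type) [Group S] (G H : Subgroup S), G.Normal → H.Normal →
      (GeomEquiv S (S ⧸ G) (S ⧸ H) ↔ G = H)) ∧
    (∀ (S : Type) [CommGroup S] (G H : Subgroup S),
      (GeomEquiv S (S ⧸ G) (S ⧸ H) ↔ G = H)) :=
  ⟨fun _ _ _ _ _ _ => geomEquiv_quotient_iff_eq, fun _ _ _ _ => geomEquiv_quotient_iff_eq⟩
end

section
/- Let S be a monoid and A an S-act with no zero element (no fixed point of the action). Then A ⊔ z₁ is not geometrically equivalent to A ⊔ z₁ ⊔ z₂, where z₁, z₂ are one-point trivial S-acts. Specifically, the kernel of the homomorphism F_{x₁,x₂} → A ⊔ z₁ ⊔ z₂ sending the first free copy of S to z₁ and the second to z₂ is a closed congruence for A ⊔ z₁ ⊔ z₂ but not for A ⊔ z₁. -/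
/-!
Let `f₀ : F_{x₁,x₂} → A ⊔ z₁ ⊔ z₂` send the `i`-th free copy of `S` to `zᵢ`. Its kernel is
closed for the target act, being the kernel of a single homomorphism. Since `f₀` is
constant on `S`-orbits, any homomorphism `f` whose kernel contains `ker f₀` satisfies
`s • f p = f (s • p) = f p`, so `f` takes values among the zeros of its target. In `A ⊔ z₁`
the only zero is `z₁`, so every such `f` identifies `x₁` with `x₂`, which `f₀` does not:
`ker f₀` is not `A ⊔ z₁`-closed. As closedness is read off the closure operator,
geometrically equivalent acts have the same closed congruences.
-/

open MulAction

section Closure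

variable {S : Type} [Monoid S] {G : Type} [MulAction S G] {n : ℕ}

theorem subset_actClosure (T : Set (FreeAct S n × FreeAct S n)) :
    T ⊆ actClosure S G T :=
  fun _ hp _ _ hT => hT hp

theorem gClosed_actClosure (T : Set (FreeAct S n × FreeAct S n)) :
    GClosed S G (actClosure S G T) :=
  ⟨{f | IsActHom S f ∧ T ⊆ actKer f}, fun _ hf => hf.1,
    Set.ext fun _ => ⟨fun hp f hf => hp f hf.1 hf.2, fun hp f hf hT => hp f ⟨hf, hT⟩⟩⟩

theorem GClosed.actClosure_subset {T : Set (FreeAct S n × FreeAct S n)}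
    (hT : GClosed S G T) : actClosure S G T ⊆ T := by
  obtain ⟨𝒜, h𝒜, rfl⟩ := hT
  exact fun p hp f hf => hp f (h𝒜 f hf) fun q hq => hq f hf

theorem gClosed_iff_actClosure_eq {T : Set (FreeAct S n × FreeAct S n)} :
    GClosed S G T ↔ actClosure S G T = T :=
  ⟨fun hT => hT.actClosure_subset.antisymm (subset_actClosure T),
    fun h => h ▸ gClosed_actClosure T⟩

theorem gClosed_actKer {f : FreeAct S n → G} (hf : IsActHom S f) :
    GClosed S G (actKer f) :=
  ⟨{f}, fun _ hg => hg ▸ hf, Set.ext fun _ => ⟨fun hp _ hg => hg ▸ hp, fun hp => hp f rfl⟩⟩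

end Closure

theorem GeomEquiv.gClosed_iff {S : Type} [Monoid S] {G₁ G₂ : Type} [MulAction S G₁]
    [MulAction S G₂] (h : GeomEquiv S G₁ G₂) {n : ℕ} {T : Set (FreeAct S n × FreeAct S n)} :
    GClosed S G₁ T ↔ GClosed S G₂ T := by
  rw [gClosed_iff_actClosure_eq, gClosed_iff_actClosure_eq, h n T]

theorem mem_fixedPoints_of_actKer_subset {S : Type} [Monoid S] {X G H : Type}
    [MulAction S X] [MulAction S H] {g : X → G} {f : X → H}
    (hg : ∀ (s : S) (p : X), g (s • p) = g p) (hf : IsActHom S f)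
    (hker : actKer g ⊆ actKer f) (p : X) : f p ∈ fixedPoints S H := fun s => by
  rw [← hf s p]
  exact hker (a := (s • p, p)) (hg s p)

theorem exists_eq_inr_of_mem_fixedPoints {S : Type} [Monoid S] {A B : Type}
    [MulAction S A] [MulAction S B] (hA : ¬ ∃ a : A, ∀ s : S, s • a = a)
    {x : A ⊕ B} (hx : x ∈ fixedPoints S (A ⊕ B)) : ∃ b, x = Sum.inr b := by
  cases x with
  | inl a => exact (hA ⟨a, fun s => Sum.inl.inj (hx s)⟩).elim
  | inr b => exact ⟨b, rfl⟩

/-- For an `S`-act `A` with no zero element, `A ⊔ z₁` is not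
geometrically equivalent to `A ⊔ z₁ ⊔ z₂`: the kernel of the homomorphism
`F_{x₁,x₂} → A ⊔ (z₁ ⊔ z₂)` sending the first free copy of `S` to `z₁` and the second to
`z₂` is a closed congruence for `A ⊔ (z₁ ⊔ z₂)` but not for `A ⊔ z₁`. -/
theorem act_plus_one_zero_not_geom_equiv_plus_two_zeros
    (S : Type) [Monoid S] (A : Type) [MulAction S A]
    (hA : ¬ ∃ a : A, ∀ s : S, s • a = a) :
    ¬ GeomEquiv S (A ⊕ PUnit) (A ⊕ (PUnit ⊕ PUnit)) ∧
    GClosed S (A ⊕ (PUnit ⊕ PUnit))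
      (actKer (fun p : FreeAct S 2 =>
        if p.1 = 0 then (Sum.inr (Sum.inl PUnit.unit) : A ⊕ (PUnit ⊕ PUnit))
        else Sum.inr (Sum.inr PUnit.unit))) ∧
    ¬ GClosed S (A ⊕ PUnit)
      (actKer (fun p : FreeAct S 2 =>
        if p.1 = 0 then (Sum.inr (Sum.inl PUnit.unit) : A ⊕ (PUnit ⊕ PUnit))
        else Sum.inr (Sum.inr PUnit.unit))) := by
  set f₀ : FreeAct S 2 → A ⊕ (PUnit ⊕ PUnit) := fun p =>
    if p.1 = 0 then Sum.inr (Sum.inl PUnit.unit) else Sum.inr (Sum.inr PUnit.unit)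
  have hinv : ∀ (s : S) (p : FreeAct S 2), f₀ (s • p) = f₀ p := fun _ _ => rfl
  have hhom : IsActHom S f₀ := fun s p => by
    rw [hinv]
    dsimp only [f₀]
    split <;> rfl
  have hne : f₀ (0, 1) ≠ f₀ (1, 1) := by simp [f₀]
  have closed : GClosed S (A ⊕ (PUnit ⊕ PUnit)) (actKer f₀) := gClosed_actKer hhom
  have identified : (((0, 1), (1, 1)) : FreeAct S 2 × FreeAct S 2) ∈
      actClosure S (A ⊕ PUnit) (actKer f₀) := fun f hf hker => by
    obtain ⟨⟨⟩, h₀⟩ := exists_eq_inr_of_mem_fixedPoints hA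
      (mem_fixedPoints_of_actKer_subset hinv hf hker (0, 1))
    obtain ⟨⟨⟩, h₁⟩ := exists_eq_inr_of_mem_fixedPoints hA
      (mem_fixedPoints_of_actKer_subset hinv hf hker (1, 1))
    rw [h₀, h₁]
  have not_closed : ¬ GClosed S (A ⊕ PUnit) (actKer f₀) := fun h =>
    hne (h.actClosure_subset identified)
  exact ⟨fun h => not_closed (h.gClosed_iff.2 closed), closed, not_closed⟩
end
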